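/- arXiv:2304.04224 — 3 statements merged into one kernel-verified Lean document; each statement's English description precedes it below -/
import Mathlib

section
/- For tensors A ∈ C^{ℓ×q×n} and B ∈ C^{q×p×n}, the t-product C = A * B satisfies bdiag(Ĉ) = bdiag(Â) · bdiag(B̂); equivalently, Ĉ^(i) = Â^(i) B̂^(i) for each i = 1,...,n. -/
open Matrix Complex Filter Topology Kronecker

noncomputable def tomega (n : ℕ) : ℂ := Complex.exp (2 * (Real.pi : ℂ) * Complex.I / (n : ℂ))

/-- DFT along the third mode (frontal slices indexed by `ZMod n`). -/
noncomputable def dft {l p n : ℕ} [NeZero n] (A : ZMod n → Matrix (Fin l) (Fin p) ℂ) :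
    ZMod n → Matrix (Fin l) (Fin p) ℂ :=
  fun k => ∑ j : ZMod n, (tomega n) ^ (k.val * j.val) • A j

/-- The t-product: circular convolution of frontal slices,
`(A * B)⁽ᵏ⁾ = ∑ⱼ A⁽ᵏ⁻ʲ⁾ B⁽ʲ⁾`, which is `fold (bcirc A * unfold B)`. -/
noncomputable def tmul3 {l q p n : ℕ} [NeZero n]
    (A : ZMod n → Matrix (Fin l) (Fin q) ℂ) (B : ZMod n → Matrix (Fin q) (Fin p) ℂ) :
    ZMod n → Matrix (Fin l) (Fin p) ℂ :=
  fun k => ∑ j : ZMod n, A (k - j) * B j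

/-- Tensor conjugate transpose: conjugate-transpose each slice and reverse slices 2..n. -/
def tconj {l p n : ℕ} (A : ZMod n → Matrix (Fin l) (Fin p) ℂ) :
    ZMod n → Matrix (Fin p) (Fin l) ℂ :=
  fun k => (A (-k))ᴴ

/-- Identity tensor: first frontal slice the identity, the rest zero. -/
noncomputable def tId (l n : ℕ) : ZMod n → Matrix (Fin l) (Fin l) ℂ :=
  fun k => if k = 0 then 1 else 0

noncomputable def dftTube {n : ℕ} [NeZero n] (a : ZMod n → ℂ) : ZMod n → ℂ :=
  fun k => ∑ j : ZMod n, (tomega n) ^ (k.val * j.val) * a j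

noncomputable def idftTube {n : ℕ} [NeZero n] (a : ZMod n → ℂ) : ZMod n → ℂ :=
  fun k => (n : ℂ)⁻¹ * ∑ j : ZMod n, (starRingEnd ℂ) ((tomega n) ^ (k.val * j.val)) * a j

/-- Tubal determinant: the tube whose Fourier coefficients are `det (Â⁽ⁱ⁾)`. -/
noncomputable def tdet {p n : ℕ} [NeZero n] (A : ZMod n → Matrix (Fin p) (Fin p) ℂ) :
    ZMod n → ℂ :=
  idftTube (fun k => (dft A k).det)

/-- Product of tubes (circular convolution). -/
noncomputable def tubeMul {n : ℕ} [NeZero n] (a b : ZMod n → ℂ) : ZMod n → ℂ :=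
  fun k => ∑ j : ZMod n, a (k - j) * b j

/-- Conjugate transpose of a tube. -/
def tubeConj {n : ℕ} (a : ZMod n → ℂ) : ZMod n → ℂ := fun k => (starRingEnd ℂ) (a (-k))

/-- Product of a tube with a tensor. -/
noncomputable def tsmul {l p n : ℕ} [NeZero n] (a : ZMod n → ℂ)
    (A : ZMod n → Matrix (Fin l) (Fin p) ℂ) : ZMod n → Matrix (Fin l) (Fin p) ℂ :=
  fun k => ∑ j : ZMod n, a (k - j) • A j

/-- Tubal power. -/
noncomputable def tubePow {n : ℕ} [NeZero n] (a : ZMod n → ℂ) : ℕ → (ZMod n → ℂ)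
  | 0 => fun k => if k = 0 then 1 else 0
  | m + 1 => tubeMul a (tubePow a m)

/-- Tensor t-power. -/
noncomputable def tpow {p n : ℕ} [NeZero n] (A : ZMod n → Matrix (Fin p) (Fin p) ℂ) :
    ℕ → (ZMod n → Matrix (Fin p) (Fin p) ℂ)
  | 0 => tId p n
  | m + 1 => tmul3 A (tpow A m)

/-- `lam` is an eigentube of `A`: each Fourier coefficient of `lam` is an eigenvalue
of the corresponding Fourier slice of `A`. -/
def isEigentube {p n : ℕ} [NeZero n] (A : ZMod n → Matrix (Fin p) (Fin p) ℂ)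
    (lam : ZMod n → ℂ) : Prop :=
  ∀ k, ∃ v : Fin p → ℂ, v ≠ 0 ∧ (dft A k) *ᵥ v = dftTube lam k • v


lemma tomega_pow_n {n : ℕ} [NeZero n] : tomega n ^ n = 1 := by
  rw [tomega, ← Complex.exp_nat_mul]
  rw [mul_div_assoc', mul_comm (n : ℂ), mul_div_assoc,
    div_self (Nat.cast_ne_zero.mpr (NeZero.ne n)), mul_one]
  exact Complex.exp_two_pi_mul_I

lemma tomega_key {n : ℕ} [NeZero n] (i a b : ZMod n) :
    tomega n ^ (i.val * (a + b).val) =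
      tomega n ^ (i.val * a.val) * tomega n ^ (i.val * b.val) := by
  rw [← pow_add, pow_eq_pow_mod _ tomega_pow_n,
    pow_eq_pow_mod (i.val * a.val + i.val * b.val) tomega_pow_n]
  congr 1
  rw [ZMod.val_add, ← mul_add, Nat.mul_mod, Nat.mod_mod_of_dvd _ dvd_rfl, ← Nat.mul_mod]

/-- the DFT turns the t-product into slicewise matrix products:
`Ĉ⁽ⁱ⁾ = Â⁽ⁱ⁾ B̂⁽ⁱ⁾` for all `i`. -/
theorem dft_tprod {l q p n : ℕ} [NeZero n]
    (A : ZMod n → Matrix (Fin l) (Fin q) ℂ) (B : ZMod n → Matrix (Fin q) (Fin p) ℂ) :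
    ∀ i : ZMod n, dft (tmul3 A B) i = dft A i * dft B i := by
  intro i
  simp only [dft, tmul3, Finset.smul_sum, Matrix.sum_mul, Matrix.mul_sum]
  rw [Finset.sum_comm]
  refine Finset.sum_congr rfl fun j _ => ?_
  refine Fintype.sum_equiv (Equiv.subRight j) _ _ fun k => ?_
  simp only [Equiv.subRight_apply]
  have hk : (k - j) + j = k := sub_add_cancel k j
  rw [← hk, tomega_key, Matrix.smul_mul, Matrix.mul_smul, smul_smul, add_sub_cancel_right]
end

section
/- Every tensor A ∈ C^{p×p×n} is f-unitarily similar to an f-upper-Hessenberg tensor: there exist an f-unitary tensor W and a tensor H with each Ĥ^(i) upper Hessenberg such that H = W^H * A * W. -/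
open Matrix Complex Filter Topology Kronecker

section Aux


lemma schur_triangular : ∀ (p : ℕ) (M : Matrix (Fin p) (Fin p) ℂ),
    ∃ U : Matrix (Fin p) (Fin p) ℂ, Uᴴ * U = 1 ∧
      ∀ i j : Fin p, (j : ℕ) < (i : ℕ) → (Uᴴ * M * U) i j = 0 := by
  intro p
  induction p with
  | zero => exact fun M => ⟨1, by simp, fun i => i.elim0⟩
  | succ q ih =>
    intro M
    -- find a unit eigenvector
    obtain ⟨μ, hμ⟩ := Module.End.exists_eigenvalue (Matrix.toLin' M)
    obtain ⟨v, hv⟩ := hμ.exists_hasEigenvector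
    have hv0 : v ≠ 0 := hv.right
    have hMv : M *ᵥ v = μ • v := by
      have := hv.apply_eq_smul; rwa [Matrix.toLin'_apply] at this
    let E := EuclideanSpace ℂ (Fin (q + 1))
    let w0 : E := WithLp.toLp 2 v
    have hw00 : w0 ≠ 0 := by
      intro h; apply hv0; have := congrArg WithLp.ofLp h; simpa [w0] using this
    let c : ℂ := ((‖w0‖⁻¹ : ℝ) : ℂ)
    let w : E := c • w0
    have hwnorm : ‖w‖ = 1 := by
      simp only [w, norm_smul, c]
      rw [Complex.norm_real, Real.norm_eq_abs, _root_.abs_of_nonneg (by positivity)]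
      exact inv_mul_cancel₀ (norm_ne_zero_iff.mpr hw00)
    have hMw : M *ᵥ (w : Fin (q+1) → ℂ) = μ • (w : Fin (q+1) → ℂ) := by
      show M *ᵥ (c • v) = μ • (c • v)
      rw [Matrix.mulVec_smul, hMv, smul_comm]
    -- extend to orthonormal basis
    have hcard : Module.finrank ℂ E = Fintype.card (Fin (q+1)) := by
      simp [E]
    have horth : Orthonormal ℂ (Set.restrict ({0} : Set (Fin (q+1))) (fun _ => w)) := by
      constructor
      · intro i; exact hwnorm
      · intro i j hij
        exfalso
        apply hij
        have hi := i.2; have hj := j.2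
        simp only [Set.mem_singleton_iff] at hi hj
        exact Subtype.ext (hi.trans hj.symm)
    obtain ⟨b, hb⟩ := horth.exists_orthonormalBasis_extension_of_card_eq hcard
    have hb0 : b 0 = w := hb 0 rfl
    -- first unitary
    let U₁ : Matrix (Fin (q+1)) (Fin (q+1)) ℂ := Matrix.of fun i j => b j i
    have hU₁entry : ∀ i j, (U₁ᴴ * U₁) i j = if i = j then 1 else 0 := by
      intro i j
      have := orthonormal_iff_ite.mp b.orthonormal i j
      rw [PiLp.inner_apply] at this
      simp only [RCLike.inner_apply] at this
      simpa [U₁, Matrix.mul_apply, Matrix.conjTranspose_apply, mul_comm] using this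
    have hU₁ : U₁ᴴ * U₁ = 1 := by
      ext i j; rw [hU₁entry]; simp [Matrix.one_apply]
    -- B has zero first column below diagonal
    set B := U₁ᴴ * M * U₁ with hBdef
    have hBcol : ∀ i : Fin (q+1), i ≠ 0 → B i 0 = 0 := by
      intro i hi
      have hMU : ∀ k, (M * U₁) k 0 = μ * b 0 k := by
        intro k
        have : (M * U₁) k 0 = (M *ᵥ (b 0 : Fin (q+1) → ℂ)) k := by
          simp [Matrix.mul_apply, Matrix.mulVec, dotProduct, U₁]
        rw [this, hb0, hMw]
        rfl
      have hinner : ∑ k, (starRingEnd ℂ) (b i k) * b 0 k = 0 := by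
        have := orthonormal_iff_ite.mp b.orthonormal i 0
        rw [PiLp.inner_apply] at this
        simp only [RCLike.inner_apply] at this
        simpa [hi, mul_comm] using this
      calc B i 0 = ∑ k, (starRingEnd ℂ) (b i k) * ((M * U₁) k 0) := by
            rw [hBdef, Matrix.mul_assoc]
            simp [Matrix.mul_apply, Matrix.conjTranspose_apply, U₁]
        _ = μ * ∑ k, (starRingEnd ℂ) (b i k) * b 0 k := by
            simp only [hMU]; rw [Finset.mul_sum]; congr 1; ext k; ring
        _ = 0 := by rw [hinner, mul_zero]
    -- block reduction
    let e : Fin 1 ⊕ Fin q ≃ Fin (q+1) := finSumFinEquiv.trans (finCongr (Nat.add_comm 1 q))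
    have he2 : ∀ j : Fin q, ((e (Sum.inr j)) : ℕ) = (j : ℕ) + 1 := by
      intro j; simp [e, finSumFinEquiv, Nat.add_comm]
    have he1 : ((e (Sum.inl 0)) : ℕ) = 0 := by simp [e, finSumFinEquiv]
    set C := B.submatrix e e with hCdef
    obtain ⟨V', hV'u, hV't⟩ := ih (C.toBlocks₂₂)
    let D₀ : Matrix (Fin 1 ⊕ Fin q) (Fin 1 ⊕ Fin q) ℂ := Matrix.fromBlocks 1 0 0 V'
    have hD₀ : D₀ᴴ * D₀ = 1 := by
      simp [D₀, Matrix.fromBlocks_conjTranspose, Matrix.fromBlocks_multiply, hV'u,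
        Matrix.fromBlocks_one]
    let V : Matrix (Fin (q+1)) (Fin (q+1)) ℂ := D₀.submatrix e.symm e.symm
    have hVct : Vᴴ = (D₀ᴴ).submatrix ⇑e.symm ⇑e.symm := by
      simp [V, Matrix.conjTranspose_submatrix]
    have hVu : Vᴴ * V = 1 := by
      rw [hVct, Matrix.submatrix_mul_equiv, hD₀, Matrix.submatrix_one_equiv]
    have hBC : B = C.submatrix ⇑e.symm ⇑e.symm := by
      rw [hCdef, Matrix.submatrix_submatrix]
      simp
    have hfinal : (U₁ * V)ᴴ * M * (U₁ * V) = (D₀ᴴ * C * D₀).submatrix ⇑e.symm ⇑e.symm := by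
      rw [Matrix.conjTranspose_mul]
      have h1 : Vᴴ * U₁ᴴ * M * (U₁ * V) = Vᴴ * (U₁ᴴ * M * U₁) * V := by
        simp only [Matrix.mul_assoc]
      rw [h1, ← hBdef, hBC, hVct, Matrix.submatrix_mul_equiv, Matrix.submatrix_mul_equiv]
    have hC21 : C.toBlocks₂₁ = 0 := by
      ext i j
      have hval : ((e (Sum.inr i)) : ℕ) = (i : ℕ) + 1 := he2 i
      have hinl : e (Sum.inl j) = 0 := by
        rw [Fin.fin_one_eq_zero j]
        exact Fin.ext he1
      have : C (Sum.inr i) (Sum.inl j) = 0 := by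
        rw [hCdef, Matrix.submatrix_apply, hinl]
        exact hBcol _ (by intro h; rw [h] at hval; simp at hval)
      simpa [Matrix.toBlocks₂₁] using this
    have hCblocks : C = Matrix.fromBlocks C.toBlocks₁₁ C.toBlocks₁₂ 0 C.toBlocks₂₂ := by
      rw [← hC21, Matrix.fromBlocks_toBlocks]
    have hD : D₀ᴴ * C * D₀ = Matrix.fromBlocks (C.toBlocks₁₁) (C.toBlocks₁₂ * V')
        0 (V'ᴴ * C.toBlocks₂₂ * V') := by
      conv_lhs => rw [hCblocks]
      simp [D₀, Matrix.fromBlocks_conjTranspose, Matrix.fromBlocks_multiply, Matrix.mul_assoc]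
    refine ⟨U₁ * V, ?_, ?_⟩
    · rw [Matrix.conjTranspose_mul]
      have h1 : Vᴴ * U₁ᴴ * (U₁ * V) = Vᴴ * (U₁ᴴ * U₁) * V := by
        simp only [Matrix.mul_assoc]
      rw [h1, hU₁, Matrix.mul_one, hVu]
    · intro i j hij
      rw [hfinal, Matrix.submatrix_apply, hD]
      have hei : e (e.symm i) = i := e.apply_symm_apply i
      have hej : e (e.symm j) = j := e.apply_symm_apply j
      rcases hsi : e.symm i with i0 | i' <;> rcases hsj : e.symm j with j0 | j'
      · exfalso
        rw [hsi] at hei; rw [hsj] at hej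
        have h1 : (i : ℕ) = 0 := by rw [← hei, Fin.fin_one_eq_zero i0]; exact he1
        omega
      · exfalso
        rw [hsi] at hei; rw [hsj] at hej
        have h1 : (i : ℕ) = 0 := by rw [← hei, Fin.fin_one_eq_zero i0]; exact he1
        have h2 : (j : ℕ) = (j' : ℕ) + 1 := by rw [← hej]; exact he2 j'
        omega
      · simp [Matrix.fromBlocks]
      · rw [hsi] at hei; rw [hsj] at hej
        have h1 : (i : ℕ) = (i' : ℕ) + 1 := by rw [← hei]; exact he2 i'
        have h2 : (j : ℕ) = (j' : ℕ) + 1 := by rw [← hej]; exact he2 j'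
        exact hV't i' j' (by omega)


lemma tomega_abs {n : ℕ} [NeZero n] : ‖tomega n‖ = 1 := by
  have : tomega n = Complex.exp (((2 * Real.pi / n : ℝ) : ℂ) * Complex.I) := by
    unfold tomega; push_cast; ring_nf
  rw [this, Complex.norm_exp_ofReal_mul_I]

lemma tomega_conj_mul {n : ℕ} [NeZero n] (t : ℕ) :
    (starRingEnd ℂ) (tomega n ^ t) * tomega n ^ t = 1 := by
  have habs : ‖tomega n ^ t‖ = 1 := by
    rw [norm_pow, tomega_abs, one_pow]
  rw [← Complex.normSq_eq_conj_mul_self, Complex.normSq_eq_norm_sq, habs]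
  norm_num

lemma tomega_pow_congr {n : ℕ} [NeZero n] {a b : ℕ} (h : a % n = b % n) :
    tomega n ^ a = tomega n ^ b := by
  have key : ∀ c : ℕ, tomega n ^ c = tomega n ^ (c % n) := by
    intro c
    conv_lhs => rw [← Nat.div_add_mod c n]
    rw [pow_add, pow_mul, tomega_pow_n, one_pow, one_mul]
  rw [key a, key b, h]

lemma zmod_sum_val {n : ℕ} [NeZero n] {M : Type*} [AddCommMonoid M] (f : ℕ → M) :
    ∑ k : ZMod n, f k.val = ∑ i ∈ Finset.range n, f i := by
  rw [Finset.sum_range]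
  let e : Fin n ≃ ZMod n :=
    { toFun := fun i => ((i : ℕ) : ZMod n)
      invFun := fun k => ⟨k.val, k.val_lt⟩
      left_inv := fun i => by ext; simp [ZMod.val_cast_of_lt i.is_lt]
      right_inv := fun k => ZMod.natCast_rightInverse k }
  rw [← Equiv.sum_comp e (fun k => f k.val)]
  apply Finset.sum_congr rfl
  intro i _
  simp [e, ZMod.val_cast_of_lt i.is_lt]

/-- Orthogonality of characters. -/
lemma tomega_orthogonality {n : ℕ} [NeZero n] (m j : ZMod n) :
    ∑ k : ZMod n, (starRingEnd ℂ) (tomega n ^ (m.val * k.val)) * tomega n ^ (j.val * k.val)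
      = if m = j then (n : ℂ) else 0 := by
  set ω := tomega n
  have hterm : ∀ k : ZMod n,
      (starRingEnd ℂ) (ω ^ (m.val * k.val)) * ω ^ (j.val * k.val)
        = (ω ^ (j - m).val) ^ k.val := by
    intro k
    have h1 : ω ^ ((j - m).val * k.val) * ω ^ (m.val * k.val) = ω ^ (j.val * k.val) := by
      rw [← pow_add]
      apply tomega_pow_congr
      have h0 : ((j - m).val + m.val) % n = j.val := by
        rw [← ZMod.val_add, show (j - m) + m = j by ring]
      rw [← add_mul]
      exact Nat.ModEq.mul_right k.val
        (by unfold Nat.ModEq; rw [h0, Nat.mod_eq_of_lt j.val_lt])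
    have h2 := tomega_conj_mul (n := n) (m.val * k.val)
    rw [← pow_mul]
    calc (starRingEnd ℂ) (ω ^ (m.val * k.val)) * ω ^ (j.val * k.val)
        = (starRingEnd ℂ) (ω ^ (m.val * k.val)) * (ω ^ ((j - m).val * k.val) * ω ^ (m.val * k.val)) := by
          rw [h1]
      _ = ((starRingEnd ℂ) (ω ^ (m.val * k.val)) * ω ^ (m.val * k.val)) * ω ^ ((j - m).val * k.val) := by
          ring
      _ = ω ^ ((j - m).val * k.val) := by rw [h2, one_mul]
  simp only [hterm]
  by_cases hmj : m = j
  · subst hmj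
    simp [ZMod.val_cast_of_lt]
  · rw [if_neg hmj]
    set d := j - m with hd
    have hd0 : d ≠ 0 := by
      intro h
      apply hmj
      have : j = m := by rwa [sub_eq_zero] at h
      exact this.symm
    have hdval : 0 < d.val :=
      Nat.pos_of_ne_zero (fun h => hd0 ((ZMod.val_eq_zero d).mp h))
    have hne1 : ω ^ d.val ≠ 1 :=
      (Complex.isPrimitiveRoot_exp n (NeZero.ne n)).pow_ne_one_of_pos_of_lt hdval.ne' d.val_lt
    rw [zmod_sum_val (fun i => (ω ^ d.val) ^ i)]
    rw [geom_sum_eq hne1]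
    rw [← pow_mul, mul_comm d.val n, pow_mul, tomega_pow_n, one_pow, sub_self, zero_div]

lemma tomega_orthogonality' {n : ℕ} [NeZero n] (m j : ZMod n) :
    ∑ k : ZMod n, (starRingEnd ℂ) (tomega n ^ (k.val * m.val)) * tomega n ^ (k.val * j.val)
      = if m = j then (n : ℂ) else 0 := by
  have := tomega_orthogonality (n := n) m j
  simpa [mul_comm] using this

lemma tomega_mulval_add {n : ℕ} [NeZero n] (k a b : ZMod n) :
    tomega n ^ (k.val * (a + b).val)
      = tomega n ^ (k.val * a.val) * tomega n ^ (k.val * b.val) := by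
  rw [← pow_add, ← Nat.left_distrib]
  apply tomega_pow_congr
  rw [ZMod.val_add]
  exact (Nat.ModEq.mul_left k.val (Nat.mod_modEq _ n))

lemma tomega_conj_pow {n : ℕ} [NeZero n] (k i : ZMod n) :
    (starRingEnd ℂ) (tomega n ^ (k.val * i.val)) = tomega n ^ (k.val * (-i).val) := by
  have hsum : ((-i).val + i.val) % n = 0 := by
    rw [← ZMod.val_add, neg_add_cancel, ZMod.val_zero]
  obtain ⟨c, hc⟩ := Nat.dvd_of_mod_eq_zero hsum
  have hω : tomega n ^ (k.val * (-i).val) * tomega n ^ (k.val * i.val) = 1 := by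
    rw [← pow_add, ← Nat.left_distrib, hc,
      show k.val * (n * c) = n * (k.val * c) by ring, pow_mul, tomega_pow_n, one_pow]
  have h2 := tomega_conj_mul (n := n) (k.val * i.val)
  calc (starRingEnd ℂ) (tomega n ^ (k.val * i.val))
      = (starRingEnd ℂ) (tomega n ^ (k.val * i.val))
          * (tomega n ^ (k.val * (-i).val) * tomega n ^ (k.val * i.val)) := by
        rw [hω, mul_one]
    _ = tomega n ^ (k.val * (-i).val)
          * ((starRingEnd ℂ) (tomega n ^ (k.val * i.val)) * tomega n ^ (k.val * i.val)) := by
        ring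
    _ = tomega n ^ (k.val * (-i).val) := by rw [h2, mul_one]

lemma dft_tmul3 {l q p n : ℕ} [NeZero n]
    (A : ZMod n → Matrix (Fin l) (Fin q) ℂ) (B : ZMod n → Matrix (Fin q) (Fin p) ℂ)
    (k : ZMod n) : dft (tmul3 A B) k = dft A k * dft B k := by
  unfold dft tmul3
  calc ∑ j : ZMod n, tomega n ^ (k.val * j.val) • ∑ b : ZMod n, A (j - b) * B b
      = ∑ b : ZMod n, ∑ j : ZMod n, tomega n ^ (k.val * j.val) • (A (j - b) * B b) := by
        rw [← Finset.sum_comm]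
        exact Finset.sum_congr rfl fun j _ => Finset.smul_sum
    _ = ∑ b : ZMod n, ∑ a : ZMod n, tomega n ^ (k.val * (a + b).val) • (A a * B b) := by
        refine Finset.sum_congr rfl fun b _ => ?_
        refine (Fintype.sum_equiv (Equiv.addRight b) _ _ (fun a => ?_)).symm
        simp
    _ = ∑ a : ZMod n, ∑ b : ZMod n,
          (tomega n ^ (k.val * a.val) • A a) * (tomega n ^ (k.val * b.val) • B b) := by
        rw [Finset.sum_comm]
        refine Finset.sum_congr rfl fun a _ => Finset.sum_congr rfl fun b _ => ?_
        rw [Matrix.smul_mul, Matrix.mul_smul, smul_smul, tomega_mulval_add]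
    _ = (∑ a : ZMod n, tomega n ^ (k.val * a.val) • A a)
          * ∑ b : ZMod n, tomega n ^ (k.val * b.val) • B b := by
        rw [Matrix.sum_mul]
        exact Finset.sum_congr rfl fun a _ => (Matrix.mul_sum _ _ _).symm

lemma dft_tconj {l p n : ℕ} [NeZero n] (A : ZMod n → Matrix (Fin l) (Fin p) ℂ)
    (k : ZMod n) : dft (tconj A) k = (dft A k)ᴴ := by
  unfold dft tconj
  rw [Matrix.conjTranspose_sum]
  refine Fintype.sum_equiv (Equiv.neg (ZMod n)) _ _ fun x => ?_
  show tomega n ^ (k.val * x.val) • (A (-x))ᴴ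
      = (tomega n ^ (k.val * (-x).val) • A (-x))ᴴ
  rw [Matrix.conjTranspose_smul]
  congr 1
  have := tomega_conj_pow k (-x)
  rw [neg_neg] at this
  exact this.symm

lemma dft_tId {p n : ℕ} [NeZero n] (k : ZMod n) : dft (tId p n) k = 1 := by
  unfold dft tId
  rw [Finset.sum_eq_single 0]
  · simp
  · intro j _ hj; simp [hj]
  · simp

noncomputable def idftT {l p n : ℕ} [NeZero n] (Q : ZMod n → Matrix (Fin l) (Fin p) ℂ) :
    ZMod n → Matrix (Fin l) (Fin p) ℂ :=
  fun m => (n : ℂ)⁻¹ • ∑ j : ZMod n, (starRingEnd ℂ) (tomega n ^ (j.val * m.val)) • Q j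

lemma ncast_ne_zero {n : ℕ} [NeZero n] : (n : ℂ) ≠ 0 :=
  Nat.cast_ne_zero.mpr (NeZero.ne n)

lemma dft_idftT {l p n : ℕ} [NeZero n] (Q : ZMod n → Matrix (Fin l) (Fin p) ℂ)
    (k : ZMod n) : dft (idftT Q) k = Q k := by
  have key : ∀ f : ZMod n → ℂ,
      ∑ m : ZMod n, tomega n ^ (k.val * m.val)
        * ((n : ℂ)⁻¹ * ∑ j : ZMod n, (starRingEnd ℂ) (tomega n ^ (j.val * m.val)) * f j)
      = f k := by
    intro f
    have h1 : ∀ m : ZMod n, tomega n ^ (k.val * m.val)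
        * ((n : ℂ)⁻¹ * ∑ j : ZMod n, (starRingEnd ℂ) (tomega n ^ (j.val * m.val)) * f j)
        = (n : ℂ)⁻¹ * ∑ j : ZMod n,
            ((starRingEnd ℂ) (tomega n ^ (j.val * m.val)) * tomega n ^ (k.val * m.val)) * f j := by
      intro m
      rw [Finset.mul_sum, Finset.mul_sum, Finset.mul_sum]
      refine Finset.sum_congr rfl fun j _ => by ring
    simp only [h1]
    rw [← Finset.mul_sum, Finset.sum_comm]
    have h2 : ∀ j : ZMod n, ∑ m : ZMod n,
        ((starRingEnd ℂ) (tomega n ^ (j.val * m.val)) * tomega n ^ (k.val * m.val)) * f j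
        = (if j = k then (n : ℂ) else 0) * f j := by
      intro j
      rw [← Finset.sum_mul, tomega_orthogonality]
    simp only [h2]
    rw [Finset.sum_eq_single k]
    · rw [if_pos rfl, ← mul_assoc, inv_mul_cancel₀ ncast_ne_zero, one_mul]
    · intro j _ hj; rw [if_neg hj, zero_mul]
    · simp
  ext a b
  have hrw : dft (idftT Q) k a b
      = ∑ m : ZMod n, tomega n ^ (k.val * m.val)
        * ((n : ℂ)⁻¹ * ∑ j : ZMod n, (starRingEnd ℂ) (tomega n ^ (j.val * m.val)) * Q j a b) := by
    simp [dft, idftT, Matrix.sum_apply, Finset.mul_sum]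
  rw [hrw]
  exact key _

lemma idftT_dft {l p n : ℕ} [NeZero n] (X : ZMod n → Matrix (Fin l) (Fin p) ℂ) :
    idftT (dft X) = X := by
  funext m
  have key : ∀ f : ZMod n → ℂ,
      (n : ℂ)⁻¹ * ∑ k : ZMod n, (starRingEnd ℂ) (tomega n ^ (k.val * m.val))
        * ∑ j : ZMod n, tomega n ^ (k.val * j.val) * f j
      = f m := by
    intro f
    have h1 : ∀ k : ZMod n, (starRingEnd ℂ) (tomega n ^ (k.val * m.val))
        * ∑ j : ZMod n, tomega n ^ (k.val * j.val) * f j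
        = ∑ j : ZMod n,
            ((starRingEnd ℂ) (tomega n ^ (k.val * m.val)) * tomega n ^ (k.val * j.val)) * f j := by
      intro k
      rw [Finset.mul_sum]
      exact Finset.sum_congr rfl fun j _ => by ring
    simp only [h1]
    rw [Finset.sum_comm]
    have h2 : ∀ j : ZMod n, ∑ k : ZMod n,
        ((starRingEnd ℂ) (tomega n ^ (k.val * m.val)) * tomega n ^ (k.val * j.val)) * f j
        = (if m = j then (n : ℂ) else 0) * f j := by
      intro j
      rw [← Finset.sum_mul, tomega_orthogonality']
    simp only [h2]
    rw [Finset.sum_eq_single m]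
    · rw [if_pos rfl, ← mul_assoc, inv_mul_cancel₀ ncast_ne_zero, one_mul]
    · intro j _ hj; rw [if_neg (fun h => hj h.symm), zero_mul]
    · simp
  ext a b
  have hrw : idftT (dft X) m a b
      = (n : ℂ)⁻¹ * ∑ k : ZMod n, (starRingEnd ℂ) (tomega n ^ (k.val * m.val))
        * ∑ j : ZMod n, tomega n ^ (k.val * j.val) * X j a b := by
    simp [dft, idftT, Matrix.sum_apply, Finset.mul_sum]
  rw [hrw]
  exact key _

lemma dft_injective {l p n : ℕ} [NeZero n]
    {X Y : ZMod n → Matrix (Fin l) (Fin p) ℂ} (h : ∀ k, dft X k = dft Y k) : X = Y := by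
  have hXY : dft X = dft Y := funext h
  rw [← idftT_dft X, ← idftT_dft Y, hXY]

end Aux

/-- every square tensor is f-unitarily similar to an f-upper-Hessenberg
tensor: `H = Wᴴ * A * W` with `W` f-unitary and every `Ĥ⁽ⁱ⁾` upper Hessenberg. -/
theorem tHessenberg_exists {p n : ℕ} [NeZero n]
    (A : ZMod n → Matrix (Fin p) (Fin p) ℂ) :
    ∃ W H : ZMod n → Matrix (Fin p) (Fin p) ℂ,
      tmul3 (tconj W) W = tId p n ∧ tmul3 W (tconj W) = tId p n ∧
      (∀ k : ZMod n, ∀ i j : Fin p, (j : ℕ) + 1 < (i : ℕ) → dft H k i j = 0) ∧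
      H = tmul3 (tconj W) (tmul3 A W) := by
  have h := fun k => schur_triangular p (dft A k)
  choose Q hQ1 hQ2 using h
  set W := idftT Q with hW
  have hdW : ∀ k, dft W k = Q k := fun k => dft_idftT Q k
  refine ⟨W, tmul3 (tconj W) (tmul3 A W), ?_, ?_, ?_, rfl⟩
  · apply dft_injective
    intro k
    rw [dft_tmul3, dft_tconj, hdW, hQ1, dft_tId]
  · apply dft_injective
    intro k
    rw [dft_tmul3, dft_tconj, hdW, dft_tId]
    exact mul_eq_one_comm.mp (hQ1 k)
  · intro k i j hij
    rw [dft_tmul3, dft_tconj, dft_tmul3, hdW, ← Matrix.mul_assoc]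
    exact hQ2 k i j (by omega)
end

section
/- Let A ∈ C^{p×p×n} have eigenpair (λ_1, U_1) with A * U_1 = λ_1 * U_1, and let V ∈ C^{p×1×n} satisfy V^H * U_1 = e (the unit tube). Then for any tube σ, the deflated tensor A_1 = A − σ * U_1 * V^H satisfies A_1 * U_1 = (λ_1 − σ) * U_1; moreover, if W is a left eigenslice of A with A^H * W = μ^H * W for an eigentube μ ≠ λ_1 (so that W^H * U_1 = 0), then A_1^H * W = μ^H * W. -/
open Matrix Complex Filter Topology Kronecker

section helpers
variable {l q p r n : ℕ} [NeZero n]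

lemma tmul3_sub_left (A B : ZMod n → Matrix (Fin l) (Fin q) ℂ)
    (C : ZMod n → Matrix (Fin q) (Fin p) ℂ) :
    tmul3 (A - B) C = tmul3 A C - tmul3 B C := by
  funext k
  simp [tmul3, Matrix.sub_mul, Finset.sum_sub_distrib]

lemma tmul3_sub_right (A : ZMod n → Matrix (Fin l) (Fin q) ℂ)
    (B C : ZMod n → Matrix (Fin q) (Fin p) ℂ) :
    tmul3 A (B - C) = tmul3 A B - tmul3 A C := by
  funext k
  simp [tmul3, Matrix.mul_sub, Finset.sum_sub_distrib]

lemma tmul3_zero_right (A : ZMod n → Matrix (Fin l) (Fin q) ℂ) :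
    tmul3 A (0 : ZMod n → Matrix (Fin q) (Fin p) ℂ) = 0 := by
  funext k; simp [tmul3]

lemma tmul3_assoc (A : ZMod n → Matrix (Fin l) (Fin q) ℂ)
    (B : ZMod n → Matrix (Fin q) (Fin r) ℂ) (C : ZMod n → Matrix (Fin r) (Fin p) ℂ) :
    tmul3 (tmul3 A B) C = tmul3 A (tmul3 B C) := by
  funext k
  simp only [tmul3]
  have l1 : ∀ x : ZMod n, (∑ j : ZMod n, A (k - x - j) * B j) * C x
      = ∑ j : ZMod n, A (k - x - j) * (B j * C x) := by
    intro x; rw [Matrix.sum_mul]; simp [Matrix.mul_assoc]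
  have r1 : ∀ x : ZMod n, A (k - x) * (∑ j : ZMod n, B (x - j) * C j)
      = ∑ j : ZMod n, A (k - x) * (B (x - j) * C j) := by
    intro x; rw [Matrix.mul_sum]
  simp only [l1, r1]
  rw [← Finset.sum_product', ← Finset.sum_product']
  refine (Fintype.sum_equiv ⟨fun p => (p.2, p.1 - p.2), fun p => (p.1 + p.2, p.1),
    fun p => by simp, fun p => by simp⟩ _ _ fun x => ?_).symm
  show A (k - x.1) * (B (x.1 - x.2) * C x.2) = A (k - x.2 - (x.1 - x.2)) * (B (x.1 - x.2) * C x.2)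
  rw [show k - x.2 - (x.1 - x.2) = k - x.1 by ring]

lemma tmul3_id_right (A : ZMod n → Matrix (Fin l) (Fin q) ℂ) :
    tmul3 A (tId q n) = A := by
  funext k
  rw [tmul3, Finset.sum_eq_single (0 : ZMod n)]
  · simp [tId]
  · intro j _ hj; simp [tId, hj]
  · simp

lemma tconj_tmul3 (A : ZMod n → Matrix (Fin l) (Fin q) ℂ)
    (B : ZMod n → Matrix (Fin q) (Fin p) ℂ) :
    tconj (tmul3 A B) = tmul3 (tconj B) (tconj A) := by
  funext k
  simp only [tconj, tmul3, Matrix.conjTranspose_sum, Matrix.conjTranspose_mul]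
  refine Finset.sum_equiv (Equiv.addRight k) (fun j => by simp) (fun j _ => ?_)
  simp only [Equiv.coe_addRight]
  rw [show -(k - (j + k)) = j by ring, show -k - j = -(j + k) by ring]

lemma tconj_sub (A B : ZMod n → Matrix (Fin l) (Fin q) ℂ) :
    tconj (A - B) = tconj A - tconj B := by
  funext k; simp [tconj]

lemma tconj_zero : tconj (0 : ZMod n → Matrix (Fin l) (Fin q) ℂ) = 0 := by
  funext k; simp [tconj]

end helpers

/-- deflation.  If `A * U₁ = λ₁ * U₁`, `Vᴴ * U₁ = e`, then the
deflated tensor `A₁ = A − σ * U₁ * Vᴴ` satisfies `A₁ * U₁ = (λ₁ − σ) * U₁`;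
moreover for a left eigenslice `W` with `Aᴴ * W = μᴴ * W`, `μ ≠ λ₁` and
`Wᴴ * U₁ = 0`, one has `A₁ᴴ * W = μᴴ * W`.  (Lateral slices are `p×1×n` tensors,
tubes are `1×1×n` tensors; tubes commute with slices under the t-product.) -/
theorem deflation {p n : ℕ} [NeZero n]
    (A : ZMod n → Matrix (Fin p) (Fin p) ℂ)
    (U1 V W : ZMod n → Matrix (Fin p) (Fin 1) ℂ)
    (lam sig mu : ZMod n → Matrix (Fin 1) (Fin 1) ℂ)
    (h1 : tmul3 A U1 = tmul3 U1 lam)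
    (h2 : tmul3 (tconj V) U1 = tId 1 n)
    (hW : tmul3 (tconj A) W = tmul3 W (tconj mu))
    (hmu : mu ≠ lam)
    (hWU : tmul3 (tconj W) U1 = 0) :
    tmul3 (A - tmul3 (tmul3 U1 sig) (tconj V)) U1 = tmul3 U1 (lam - sig) ∧
    tmul3 (tconj (A - tmul3 (tmul3 U1 sig) (tconj V))) W = tmul3 W (tconj mu) := by
  constructor
  · rw [tmul3_sub_left, tmul3_assoc, h2, tmul3_id_right, h1, tmul3_sub_right]
  · have hU1W : tmul3 (tconj U1) W = 0 := by
      have := congrArg tconj hWU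
      rwa [tconj_tmul3, tconj_zero, show tconj (tconj W) = W from by funext k; simp [tconj]] at this
    rw [tconj_sub, tmul3_sub_left, hW, tconj_tmul3, tconj_tmul3, tmul3_assoc, tmul3_assoc,
      hU1W, tmul3_zero_right, tmul3_zero_right, sub_zero]
end
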